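/- arXiv:2310.17633 — 4 statements merged into one kernel-verified Lean document; each statement's English description precedes it below -/
import Mathlib

section
/- For c = 2√α and 0 < ε < 1 − α, the equation (ν² + cν + α − λ)(ν² + cν + (α−1)/ε − λ) = 0 with ν = −√α + ik, k ∈ ℝ, has no solutions λ with Re λ > 0; moreover if λ = iω with ω ∈ ℝ is a solution, then ω = k = 0. -/
open Real Complex

/-- On the weighted contour `ν = -√α + i k`, the dispersion relation about the
pure TC state has no roots with `Re λ > 0`, and the only purely imaginary root
is `λ = 0`, occurring at `k = 0`. -/
theorem dispersion_no_unstable_spectrum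
    (α ε : ℝ) (hα : 0 < α) (hα1 : α < 1) (hε : 0 < ε) (hε1 : ε < 1 - α)
    (c : ℝ) (hc : c = 2 * Real.sqrt α)
    (d : ℂ → ℂ → ℂ)
    (hd : ∀ lam ν, d lam ν =
      (ν ^ 2 + (c : ℂ) * ν + (α : ℂ) - lam) *
        (ν ^ 2 + (c : ℂ) * ν + ((α : ℂ) - 1) / (ε : ℂ) - lam)) :
    (∀ (lam : ℂ) (k : ℝ), d lam (-(Real.sqrt α : ℂ) + Complex.I * k) = 0 →
      ¬ (0 < lam.re)) ∧
    (∀ (ω k : ℝ), d (Complex.I * ω) (-(Real.sqrt α : ℂ) + Complex.I * k) = 0 →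
      ω = 0 ∧ k = 0) := by
  have hs : (Real.sqrt α : ℝ) ^ 2 = α := Real.sq_sqrt hα.le
  have hsC : ((Real.sqrt α : ℝ) : ℂ) ^ 2 = (α : ℂ) := by
    exact_mod_cast congrArg (Complex.ofReal) hs
  have key : ∀ k : ℝ,
      (-(Real.sqrt α : ℂ) + Complex.I * k) ^ 2
        + (c : ℂ) * (-(Real.sqrt α : ℂ) + Complex.I * k) + (α : ℂ)
      = -(k : ℂ) ^ 2 := by
    intro k
    rw [← hsC, hc]
    push_cast
    linear_combination (k : ℂ) ^ 2 * Complex.I_sq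
  have hεC : (ε : ℂ) ≠ 0 := by exact_mod_cast hε.ne'
  have hq : ((α : ℂ) - 1) / (ε : ℂ) = (((α - 1) / ε : ℝ) : ℂ) := by push_cast; ring
  have hqneg : (α - 1) / ε < 0 := div_neg_of_neg_of_pos (by linarith) hε
  have aux : ∀ (ω r : ℝ), Complex.I * ω = (r : ℂ) → ω = 0 ∧ r = 0 := by
    intro ω r heq
    rw [Complex.ext_iff] at heq
    simp at heq
    exact ⟨heq.2, heq.1.symm⟩
  have cases : ∀ (lam : ℂ) (k : ℝ),
      d lam (-(Real.sqrt α : ℂ) + Complex.I * k) = 0 →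
      lam = ((-(k ^ 2) : ℝ) : ℂ) ∨ lam = ((-(k ^ 2) - α + (α - 1) / ε : ℝ) : ℂ) := by
    intro lam k h
    rw [hd] at h
    rcases mul_eq_zero.mp h with h1 | h1
    · left
      have hkey := key k
      push_cast
      linear_combination hkey - h1
    · right
      have hkey := key k
      push_cast
      rw [hq] at h1
      push_cast at h1
      linear_combination hkey - h1
  constructor
  · intro lam k h hpos
    rcases cases lam k h with rfl | rfl
    · rw [Complex.ofReal_re] at hpos
      nlinarith [sq_nonneg k]
    · rw [Complex.ofReal_re] at hpos
      nlinarith [sq_nonneg k]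
  · intro ω k h
    rcases cases (Complex.I * ω) k h with heq | heq
    · obtain ⟨hω, hr⟩ := aux _ _ heq
      refine ⟨hω, ?_⟩
      nlinarith [sq_nonneg k]
    · obtain ⟨hω, hr⟩ := aux _ _ heq
      exfalso
      nlinarith [sq_nonneg k]
end

section
/- The reduced nonlinearity f̃(u;α) = u(1 − u − v_α(u)) satisfies the Fisher-KPP condition f̃(u;α) ≤ f̃'(0;α)·u = αu for all 0 ≤ u ≤ 1 and 0 < α < 1. -/
open Real

/-- Fisher-KPP condition for the reduced nonlinearity: `f̃(u) ≤ α u` on `[0,1]`. -/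
theorem reduced_nonlinearity_KPP
    (α : ℝ) (hα : 0 < α) (hα1 : α < 1)
    (vα : ℝ → ℝ)
    (hv : ∀ u, vα u = (1 - α - 2 * u) / 2 +
      Real.sqrt (u - u ^ 2 + (1 / 4) * (1 - 2 * u - α) ^ 2))
    (ftilde : ℝ → ℝ) (hft : ∀ u, ftilde u = u * (1 - u - vα u)) :
    ∀ u : ℝ, 0 ≤ u → u ≤ 1 → ftilde u ≤ α * u := by
  intro u hu hu1
  rw [hft, hv]
  have hkey : u - u ^ 2 + (1 / 4) * (1 - 2 * u - α) ^ 2 = ((1 - α) / 2) ^ 2 + α * u := by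
    ring
  have hs : (1 - α) / 2 ≤ Real.sqrt (u - u ^ 2 + (1 / 4) * (1 - 2 * u - α) ^ 2) := by
    rw [hkey]
    have h1 : (1 - α) / 2 = Real.sqrt (((1 - α) / 2) ^ 2) := by
      rw [Real.sqrt_sq (by linarith)]
    rw [h1]
    exact Real.sqrt_le_sqrt (by nlinarith)
  nlinarith [hs, mul_nonneg hu (sub_nonneg.2 hs)]
end

section
/- Fix 0 < α < 1, δ₁ > 0, θ ∈ [−3π/4, 3π/4], and real numbers u, v with u + v ≥ 3(1−α)/4. Then the matrix A₀ = [[0, δ₁, 0, 0], [δ₁e^{iθ}, 0, 0, 0], [0, 0, 0, 1], [−g_u, 0, δ₁²e^{iθ} − g_v, 0]] with g_v = 1 − α − 2(u+v) is hyperbolic: none of its eigenvalues is purely imaginary. -/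
open Real Complex Matrix

/-- Hyperbolicity of the frozen-coefficient matrix `A₀` in the large-`λ`
analysis: no eigenvalue of `A₀` is purely imaginary. -/
theorem frozen_matrix_hyperbolic
    (α δ₁ θ u v : ℝ) (hα : 0 < α) (hα1 : α < 1) (hδ₁ : 0 < δ₁)
    (hθ : -(3 * π / 4) ≤ θ) (hθ' : θ ≤ 3 * π / 4)
    (huv : 3 * (1 - α) / 4 ≤ u + v)
    (gu gv : ℝ) (hgu : gu = 1 - 2 * (u + v)) (hgv : gv = 1 - α - 2 * (u + v))
    (A₀ : Matrix (Fin 4) (Fin 4) ℂ)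
    (hA : A₀ = !![0, (δ₁ : ℂ), 0, 0;
                  (δ₁ : ℂ) * Complex.exp (Complex.I * θ), 0, 0, 0;
                  0, 0, 0, 1;
                  -(gu : ℂ), 0, (δ₁ : ℂ) ^ 2 * Complex.exp (Complex.I * θ) - (gv : ℂ), 0]) :
    ∀ μ ∈ spectrum ℂ A₀, μ.re ≠ 0 := by
  intro μ hμ hre
  rw [spectrum.mem_iff] at hμ
  have hdet : ((algebraMap ℂ (Matrix (Fin 4) (Fin 4) ℂ)) μ - A₀).det = 0 := by
    by_contra h
    exact hμ ((Matrix.isUnit_iff_isUnit_det _).mpr (Ne.isUnit h))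
  set E := Complex.exp (Complex.I * θ) with hE
  have hM : (algebraMap ℂ (Matrix (Fin 4) (Fin 4) ℂ)) μ - A₀ =
      !![μ, -(δ₁:ℂ), 0, 0;
         -((δ₁:ℂ) * E), μ, 0, 0;
         0, 0, μ, -1;
         (gu:ℂ), 0, -((δ₁:ℂ)^2 * E - (gv:ℂ)), μ] := by
    rw [hA]
    ext i j
    fin_cases i <;> fin_cases j <;>
      simp [Matrix.algebraMap_eq_diagonal, Matrix.diagonal_apply, Matrix.vecHead, Matrix.vecTail] <;> ring
  rw [hM] at hdet
  simp [Matrix.det_succ_row_zero, Fin.sum_univ_succ, Fin.succAbove, Matrix.vecHead, Matrix.vecTail] at hdet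
  have key : (μ^2 - (δ₁:ℂ)^2*E) * (μ^2 - ((δ₁:ℂ)^2*E - (gv:ℝ))) = 0 := by
    linear_combination hdet
  -- μ is purely imaginary, so μ^2 is a nonpositive real
  have hsq_re : (μ^2).re = -(μ.im^2) := by
    simp [pow_two, Complex.mul_re, hre]
  have hsq_im : (μ^2).im = 0 := by
    simp [pow_two, Complex.mul_im, hre]
  have hEre : E.re = Real.cos θ := by
    rw [hE, mul_comm, Complex.exp_mul_I]
    simp [Complex.cos_ofReal_re, Complex.sin_ofReal_im]
  have hEim : E.im = Real.sin θ := by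
    rw [hE, mul_comm, Complex.exp_mul_I]
    simp [Complex.cos_ofReal_im, Complex.sin_ofReal_re]
  have hπ : (0:ℝ) < π := Real.pi_pos
  have hθ0 : ∀ h : Real.sin θ = 0, θ = 0 := by
    intro h
    have h1 : -π < θ := by nlinarith
    have h2 : θ < π := by nlinarith
    exact (Real.sin_eq_zero_iff_of_lt_of_lt h1 h2).mp h
  rcases mul_eq_zero.mp key with h | h
  · have h' := sub_eq_zero.mp h
    have him : (0:ℝ) = δ₁^2 * Real.sin θ := by
      have := congrArg Complex.im h'
      simpa [pow_two, Complex.mul_im, Complex.mul_re, hre, hEre, hEim] using this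
    have hs : Real.sin θ = 0 := by
      rcases mul_eq_zero.mp him.symm with h0 | h0
      · exact absurd h0 (pow_ne_zero _ (ne_of_gt hδ₁))
      · exact h0
    have hθz := hθ0 hs
    have hrex := congrArg Complex.re h'
    rw [hsq_re] at hrex
    simp [pow_two, Complex.mul_re, Complex.mul_im, hEre, hEim, hθz, hs] at hrex
    nlinarith [sq_nonneg μ.im, sq_nonneg δ₁]
  · have h' := sub_eq_zero.mp h
    have him : (0:ℝ) = δ₁^2 * Real.sin θ := by
      have := congrArg Complex.im h'
      simpa [pow_two, Complex.mul_im, Complex.mul_re, Complex.sub_im, hre, hEre, hEim] using this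
    have hs : Real.sin θ = 0 := by
      rcases mul_eq_zero.mp him.symm with h0 | h0
      · exact absurd h0 (pow_ne_zero _ (ne_of_gt hδ₁))
      · exact h0
    have hθz := hθ0 hs
    have hrex := congrArg Complex.re h'
    rw [hsq_re] at hrex
    simp [pow_two, Complex.mul_re, Complex.mul_im, Complex.sub_re, hEre, hEim, hθz, hs] at hrex
    nlinarith [sq_nonneg μ.im]
end

section
/- For 0 < α < 1, any point on the manifold M₀ = {(u, w, v, z) : z = 0, v = v_α(u)} with u > −(1−α)²/(4α) is normally hyperbolic for the fast system at δ = 0; equivalently, the partial derivative g_v(u, v_α(u)) = 1 − α − 2u − 2v_α(u) is strictly negative there. -/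
open Real

/-- Normal hyperbolicity of the slow manifold: for `u > -(1-α)²/(4α)`, the
square-root discriminant is strictly positive and `g_v(u, v_α(u)) < 0`. -/
theorem slow_manifold_normally_hyperbolic
    (α : ℝ) (hα : 0 < α) (hα1 : α < 1)
    (vα : ℝ → ℝ)
    (hv : ∀ u, vα u = (1 - α - 2 * u) / 2 +
      Real.sqrt (u - u ^ 2 + (1 / 4) * (1 - 2 * u - α) ^ 2)) :
    ∀ u : ℝ, -(1 - α) ^ 2 / (4 * α) < u →
      0 < u - u ^ 2 + (1 / 4) * (1 - 2 * u - α) ^ 2 ∧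
      1 - α - 2 * u - 2 * vα u < 0 := by
  intro u hu
  have hD : u - u ^ 2 + (1 / 4) * (1 - 2 * u - α) ^ 2 = α * u + (1 - α) ^ 2 / 4 := by
    ring
  have hpos : 0 < u - u ^ 2 + (1 / 4) * (1 - 2 * u - α) ^ 2 := by
    rw [hD]
    have h4 : 0 < (4 : ℝ) * α := by linarith
    have := (div_lt_iff₀ h4).mp hu
    nlinarith
  refine ⟨hpos, ?_⟩
  have hs : 0 < Real.sqrt (u - u ^ 2 + (1 / 4) * (1 - 2 * u - α) ^ 2) :=
    Real.sqrt_pos.mpr hpos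
  rw [hv u]
  linarith
end
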